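/- Let h be a complex-valued harmonic function on A(1,R), let U(ρ) = ⨍_{C_ρ} |h|², and fix λ ∈ (−1, 1]. Then for every ρ ∈ (1,R) the following two identities hold: (a) L^λ[U](ρ) = 2 ⨍_{C_ρ} [ ‖Dh‖² − (1/ρ) d/dρ( ((ρ²−λ)/(ρ²+λ)) |h|² ) ]; (b) L^λ[U](ρ) = (2/ρ²) ⨍_{C_ρ} [ |h_θ|² − |h|² + (ρ²+λ)² | d/dρ( ρ h /(ρ²+λ) ) |² ], where h_θ denotes the angular derivative of h. -/

import Mathlib

open MeasureTheory Filter Set Topology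
open scoped ENNReal

noncomputable section

/-- The round annulus `A(r,R) = {z : r < |z| < R}`. -/
def ann (r R : ℝ) : Set ℂ := {z : ℂ | r < ‖z‖ ∧ ‖z‖ < R}

/-- The Laplacian of `h : ℂ → ℂ`, viewed as a function of two real variables. -/
def lap (h : ℂ → ℂ) (z : ℂ) : ℂ :=
  fderiv ℝ (fun w => fderiv ℝ h w 1) z 1 +
    fderiv ℝ (fun w => fderiv ℝ h w Complex.I) z Complex.I

/-- A complex-valued harmonic function on a set (real and imaginary parts harmonic). -/
def HarmOn (h : ℂ → ℂ) (s : Set ℂ) : Prop :=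
  ContDiffOn ℝ 2 h s ∧ ∀ z ∈ s, lap h z = 0

/-- Cauchy–Riemann derivative `h_z`. -/
def dz (h : ℂ → ℂ) (z : ℂ) : ℂ :=
  (fderiv ℝ h z 1 - Complex.I * fderiv ℝ h z Complex.I) / 2

/-- Cauchy–Riemann derivative `h_z̄`. -/
def dzbar (h : ℂ → ℂ) (z : ℂ) : ℂ :=
  (fderiv ℝ h z 1 + Complex.I * fderiv ℝ h z Complex.I) / 2

/-- Jacobian determinant `J(z,h) = |h_z|² − |h_z̄|²`. -/
def jac (h : ℂ → ℂ) (z : ℂ) : ℝ := ‖dz h z‖ ^ 2 - ‖dzbar h z‖ ^ 2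

/-- Squared Hilbert–Schmidt norm `‖Dh‖² = 2(|h_z|² + |h_z̄|²) = |h_x|² + |h_y|²`. -/
def Dn2 (h : ℂ → ℂ) (z : ℂ) : ℝ :=
  ‖fderiv ℝ h z 1‖ ^ 2 + ‖fderiv ℝ h z Complex.I‖ ^ 2

/-- Cluster set of `h` at the inner circle of the annulus `A(r,R)`. -/
def clusterInner (h : ℂ → ℂ) (r R : ℝ) : Set ℂ :=
  ⋂ ρ ∈ Set.Ioo r R, closure (h '' ann r ρ)

/-- `h` is an orientation-preserving harmonic homeomorphism of `A(r,R)` onto `T`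
whose cluster set at the inner circle of `A(r,R)` is `ibdry` (the inner boundary of `T`). -/
def IsHarmHomeo (h : ℂ → ℂ) (r R : ℝ) (T : Set ℂ) (ibdry : Set ℂ) : Prop :=
  HarmOn h (ann r R) ∧ (∀ z ∈ ann r R, 0 < jac h z) ∧
    Set.BijOn h (ann r R) T ∧ clusterInner h r R = ibdry

/-- Circular mean `⨍_{C_ρ} f`. -/
def cAvg (f : ℂ → ℂ) (ρ : ℝ) : ℂ :=
  (2 * Real.pi)⁻¹ • ∫ θ in (0:ℝ)..(2 * Real.pi), f ((ρ : ℂ) * Complex.exp ((θ : ℂ) * Complex.I))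

/-- Quadratic mean `U(ρ) = ⨍_{C_ρ} |h|²`. -/
def qMean (h : ℂ → ℂ) (ρ : ℝ) : ℝ :=
  (2 * Real.pi)⁻¹ * ∫ θ in (0:ℝ)..(2 * Real.pi),
    ‖h ((ρ : ℂ) * Complex.exp ((θ : ℂ) * Complex.I))‖ ^ 2

/-- Variance `V(ρ) = ⨍_{C_ρ}|h|² − |⨍_{C_ρ} h|²`. -/
def vVar (h : ℂ → ℂ) (ρ : ℝ) : ℝ := qMean h ρ - ‖cAvg h ρ‖ ^ 2

/-- Circular mean of the radial (normal) derivative, `⨍_{C_ρ} ∂h/∂ρ`. -/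
def rAvg (h : ℂ → ℂ) (ρ : ℝ) : ℂ :=
  (2 * Real.pi)⁻¹ • ∫ θ in (0:ℝ)..(2 * Real.pi),
    fderiv ℝ h ((ρ : ℂ) * Complex.exp ((θ : ℂ) * Complex.I)) (Complex.exp ((θ : ℂ) * Complex.I))

/-- Mean outer radius `R_*(h) = lim_{ρ↗R} (⨍_{C_ρ}|h|²)^{1/2}`, as a value in `[0,∞]`
(the limit exists since the quadratic means are increasing; we use the `limsup`). -/
def Rstar (h : ℂ → ℂ) (R : ℝ) : ℝ≥0∞ :=
  Filter.limsup (fun ρ => ENNReal.ofReal (Real.sqrt (qMean h ρ))) (𝓝[<] R)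

/-- The ordinary differential operator `L^λ`. -/
def Lop (l : ℝ) (F : ℝ → ℝ) (ρ : ℝ) : ℝ :=
  deriv (deriv F) ρ + ((3 * l - ρ ^ 2) / (ρ * (ρ ^ 2 + l))) * deriv F ρ
    - (8 * l / (ρ ^ 2 + l) ^ 2) * F ρ

/-- The extremal mapping `h^λ(z) = (1/(1+λ))(z + λ/z̄)`. -/
def hext (l : ℝ) (z : ℂ) : ℂ := (1 / (1 + (l : ℂ))) * (z + (l : ℂ) / (starRingEnd ℂ z))

/-- `A` is a doubly connected domain whose inner boundary is the unit circle:
its complement is the disjoint union of the closed unit disk and an unbounded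
closed connected set. -/
def DCUnit (A : Set ℂ) : Prop :=
  IsOpen A ∧ IsConnected A ∧
    ∃ G : Set ℂ, IsClosed G ∧ IsConnected G ∧ ¬ Bornology.IsBounded G ∧
      Disjoint (Metric.closedBall (0 : ℂ) 1) G ∧ Aᶜ = Metric.closedBall (0 : ℂ) 1 ∪ G

/-- Circular mean `⨍_{C_ρ} Im(h̄ · h_θ)` where `h_θ` is the angular derivative. -/
def angMean (h : ℂ → ℂ) (ρ : ℝ) : ℝ :=
  (2 * Real.pi)⁻¹ * ∫ θ in (0:ℝ)..(2 * Real.pi),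
    (starRingEnd ℂ (h ((ρ : ℂ) * Complex.exp ((θ : ℂ) * Complex.I))) *
      fderiv ℝ h ((ρ : ℂ) * Complex.exp ((θ : ℂ) * Complex.I))
        (Complex.I * ((ρ : ℂ) * Complex.exp ((θ : ℂ) * Complex.I)))).im

/-!
Write `U(ρ) = ⨍ |h(ρe^{iθ})|²`. Differentiating twice under the integral sign gives
`U' = ⨍ 2⟨h, h_ρ⟩` and `U'' = ⨍ 2|h_ρ|² + 2⟨h, h_ρρ⟩`. Harmonicity in polar form,
`ρ² h_ρρ + ρ h_ρ + h_θθ = 0`, together with `⨍ ⟨h, h_θθ⟩ = -⨍ |h_θ|²` (periodicity in `θ`) and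
`|h_ρ|² + ρ⁻²|h_θ|² = ‖Dh‖²`, yields the energy identity `ρ² U'' + ρ U' = 2ρ² ⨍ ‖Dh‖²`.
Eliminating `U''` turns `L^λ[U]` into `2⨍‖Dh‖² - 8λ(ρ²+λ)⁻² U - 2(ρ²-λ)(ρ(ρ²+λ))⁻¹ U'`, and the
product rule in `ρ` expands both right-hand sides to this same combination of `⨍‖Dh‖²`, `U`, `U'`.
-/

open Complex (I)
open scoped Real RealInnerProductSpace Complex

section Rotation

variable {E : Type*} [NormedAddCommGroup E] [NormedSpace ℝ E]

theorem ContinuousLinearMap.apply_apply_add_apply_apply_I_mul (M : ℂ →L[ℝ] ℂ →L[ℝ] E) {u : ℂ}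
    (hu : ‖u‖ = 1) : M u u + M (I * u) (I * u) = M 1 1 + M I I := by
  obtain ⟨a, b, rfl⟩ : ∃ a b : ℝ, u = a • (1 : ℂ) + b • I :=
    ⟨u.re, u.im, by simp [Complex.real_smul, Complex.re_add_im]⟩
  have hab : a ^ 2 + b ^ 2 = 1 := by
    have := Complex.sq_norm (a • (1 : ℂ) + b • I)
    simp only [hu, Complex.normSq_apply] at this
    simpa [sq] using this.symm
  have hIu : I * (a • (1 : ℂ) + b • I) = (-b) • (1 : ℂ) + a • I := by
    simp only [Complex.real_smul, Complex.ofReal_neg]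
    linear_combination (b : ℂ) * Complex.I_mul_I
  rw [hIu]
  simp only [map_add, map_smul, add_apply, FunLike.coe_smul, Pi.smul_apply]
  linear_combination (norm := module) hab • (M 1 1 + M I I)

variable {F : Type*} [NormedAddCommGroup F] [InnerProductSpace ℝ F]

theorem ContinuousLinearMap.norm_sq_apply_add_norm_sq_apply_I_mul (L : ℂ →L[ℝ] F) {u : ℂ}
    (hu : ‖u‖ = 1) : ‖L u‖ ^ 2 + ‖L (I * u)‖ ^ 2 = ‖L 1‖ ^ 2 + ‖L I‖ ^ 2 := by
  simpa [real_inner_self_eq_norm_sq] using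
    ((innerSL ℝ).bilinearComp L L).apply_apply_add_apply_apply_I_mul hu

end Rotation

theorem norm_smul_add_smul_sq {F : Type*} [NormedAddCommGroup F] [InnerProductSpace ℝ F]
    (a b : ℝ) (x y : F) :
    ‖a • x + b • y‖ ^ 2 = a ^ 2 * ‖x‖ ^ 2 + a * b * (2 * ⟪x, y⟫) + b ^ 2 * ‖y‖ ^ 2 := by
  rw [norm_add_sq_real, norm_smul, norm_smul, inner_smul_left, inner_smul_right, Real.norm_eq_abs,
    Real.norm_eq_abs, mul_pow, mul_pow, sq_abs, sq_abs, conj_trivial]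
  ring

section Polar

variable {F : Type*} [NormedAddCommGroup F] [NormedSpace ℝ F] {g : ℂ → F} {c : ℂ} {t θ : ℝ}

theorem hasDerivAt_circleMap_radius (c : ℂ) (θ t : ℝ) :
    HasDerivAt (fun s : ℝ => circleMap c s θ) (cexp (θ * I)) t := by
  simpa [circleMap] using ((hasDerivAt_id t).ofReal_comp.mul_const (cexp (θ * I))).const_add c

theorem DifferentiableAt.hasDerivAt_comp_circleMap_radius
    (hg : DifferentiableAt ℝ g (circleMap c t θ)) :
    HasDerivAt (fun s => g (circleMap c s θ)) (fderiv ℝ g (circleMap c t θ) (cexp (θ * I))) t :=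
  hg.hasFDerivAt.comp_hasDerivAt t (hasDerivAt_circleMap_radius c θ t)

theorem DifferentiableAt.hasDerivAt_comp_circleMap (hg : DifferentiableAt ℝ g (circleMap c t θ)) :
    HasDerivAt (fun φ => g (circleMap c t φ))
      (fderiv ℝ g (circleMap c t θ) (circleMap 0 t θ * I)) θ :=
  hg.hasFDerivAt.comp_hasDerivAt θ (hasDerivAt_circleMap c t θ)

theorem circleMap_zero_mul_I (ρ θ : ℝ) : circleMap 0 ρ θ * I = ρ • (I * cexp (θ * I)) := by
  rw [circleMap_zero, Complex.real_smul]
  ring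

/-- With `L = Dh(z)` and `M = D²h(z)` at `z = ρe^{iθ}`, the left side is
`ρ² h_ρρ + ρ h_ρ + h_θθ`. -/
theorem ContinuousLinearMap.polar_laplacian (L : ℂ →L[ℝ] F) (M : ℂ →L[ℝ] ℂ →L[ℝ] F) (ρ θ : ℝ) :
    ρ ^ 2 • M (cexp (θ * I)) (cexp (θ * I)) + ρ • L (cexp (θ * I)) +
        (M (circleMap 0 ρ θ * I) (circleMap 0 ρ θ * I) + L (circleMap 0 ρ θ * I * I)) =
      ρ ^ 2 • (M 1 1 + M I I) := by
  have hzI : circleMap 0 ρ θ * I * I = (-ρ) • cexp (θ * I) := by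
    rw [circleMap_zero, Complex.real_smul, mul_assoc, Complex.I_mul_I]
    push_cast
    ring
  rw [hzI, circleMap_zero_mul_I,
    ← M.apply_apply_add_apply_apply_I_mul (Complex.norm_exp_ofReal_mul_I θ)]
  simp only [map_smul, smul_apply]
  module

end Polar

theorem polar_energy_identity {F : Type*} [NormedAddCommGroup F] [InnerProductSpace ℝ F]
    (L : ℂ →L[ℝ] F) (M : ℂ →L[ℝ] ℂ →L[ℝ] F) (hM : M 1 1 + M I I = 0) (w : F) (ρ θ : ℝ) :
    ρ ^ 2 * (2 * ‖L (cexp (θ * I))‖ ^ 2 + 2 * ⟪w, M (cexp (θ * I)) (cexp (θ * I))⟫) +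
        ρ * (2 * ⟪w, L (cexp (θ * I))⟫) +
        2 * (‖L (circleMap 0 ρ θ * I)‖ ^ 2 +
          ⟪w, M (circleMap 0 ρ θ * I) (circleMap 0 ρ θ * I) + L (circleMap 0 ρ θ * I * I)⟫) =
      2 * ρ ^ 2 * (‖L 1‖ ^ 2 + ‖L I‖ ^ 2) := by
  have hlap := congrArg (⟪w, ·⟫) (L.polar_laplacian M ρ θ)
  simp only [hM, smul_zero, inner_zero_right, inner_add_right, inner_smul_right] at hlap
  have hnorm : ‖L (circleMap 0 ρ θ * I)‖ ^ 2 = ρ ^ 2 * ‖L (I * cexp (θ * I))‖ ^ 2 := by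
    rw [circleMap_zero_mul_I, map_smul, norm_smul, Real.norm_eq_abs, mul_pow, sq_abs]
  rw [hnorm, ← L.norm_sq_apply_add_norm_sq_apply_I_mul (Complex.norm_exp_ofReal_mul_I θ),
    inner_add_right]
  linear_combination 2 * hlap

theorem lap_eq_fderiv_fderiv {h : ℂ → ℂ} {z : ℂ} (hh : DifferentiableAt ℝ (fderiv ℝ h) z) :
    lap h z = fderiv ℝ (fderiv ℝ h) z 1 1 + fderiv ℝ (fderiv ℝ h) z I I := by
  simp [lap, fderiv_clm_apply hh (differentiableAt_const _)]

theorem hasDerivAt_intervalIntegral_of_continuousOn {E : Type*} [NormedAddCommGroup E]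
    [NormedSpace ℝ E] {F F' : ℝ → ℝ → E} {s : Set ℝ} {a b t : ℝ} (hs : IsOpen s) (ht : t ∈ s)
    (hF : ContinuousOn (fun p : ℝ × ℝ => F p.1 p.2) (s ×ˢ uIcc a b))
    (hF' : ContinuousOn (fun p : ℝ × ℝ => F' p.1 p.2) (s ×ˢ uIcc a b))
    (hderiv : ∀ x ∈ s, ∀ θ ∈ uIcc a b, HasDerivAt (F · θ) (F' x θ) x) :
    HasDerivAt (fun x => ∫ θ in a..b, F x θ) (∫ θ in a..b, F' t θ) t := by
  obtain ⟨ε, hε, hball⟩ := Metric.nhds_basis_closedBall.mem_iff.1 (hs.mem_nhds ht)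
  obtain ⟨C, hC⟩ := (isCompact_closedBall t ε |>.prod isCompact_uIcc).exists_bound_of_continuousOn
    (hF'.mono (prod_mono hball le_rfl))
  have slice : ∀ {G : ℝ → ℝ → E}, ContinuousOn (fun p : ℝ × ℝ => G p.1 p.2) (s ×ˢ uIcc a b) →
      ∀ x ∈ s, ContinuousOn (G x) (uIcc a b) := fun hG x hx =>
    hG.comp (Continuous.prodMk_right x).continuousOn fun θ hθ => ⟨hx, hθ⟩
  have measurable : ∀ {G : ℝ → ℝ → E}, ContinuousOn (fun p : ℝ × ℝ => G p.1 p.2) (s ×ˢ uIcc a b) →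
      ∀ x ∈ s, AEStronglyMeasurable (G x) (volume.restrict (uIoc a b)) := fun hG x hx =>
    ((slice hG x hx).mono uIoc_subset_uIcc).aestronglyMeasurable measurableSet_uIoc
  exact (intervalIntegral.hasDerivAt_integral_of_dominated_loc_of_deriv_le (bound := fun _ => C)
    (Metric.closedBall_mem_nhds t hε) (eventually_of_mem (hs.mem_nhds ht) (measurable hF))
    (slice hF t ht).intervalIntegrable (measurable hF' t ht)
    (.of_forall fun θ hθ x hx => hC (x, θ) ⟨hx, uIoc_subset_uIcc hθ⟩) intervalIntegrable_const
    (.of_forall fun θ hθ x hx => hderiv x (hball hx) θ (uIoc_subset_uIcc hθ))).2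

theorem integral_eq_zero_of_hasDerivAt_comp_circleMap {F : Type*} [NormedAddCommGroup F]
    [NormedSpace ℝ F] [CompleteSpace F] {f : ℂ → F} {f' : ℝ → F} {c : ℂ} {R : ℝ}
    (hf : ∀ θ, HasDerivAt (fun θ => f (circleMap c R θ)) (f' θ) θ)
    (hint : IntervalIntegrable f' volume 0 (2 * π)) :
    ∫ θ in (0)..2 * π, f' θ = 0 := by
  rw [intervalIntegral.integral_eq_sub_of_hasDerivAt (fun θ _ => hf θ) hint,
    ← zero_add (2 * π), periodic_circleMap c R 0, sub_self]

theorem continuous_comp_circleMap {F : Type*} [TopologicalSpace F] {g : ℂ → F} {c : ℂ} {R : ℝ}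
    (hg : ∀ θ, ContinuousAt g (circleMap c R θ)) : Continuous fun θ => g (circleMap c R θ) :=
  continuous_iff_continuousAt.2 fun θ => (hg θ).comp (continuous_circleMap c R).continuousAt

theorem continuousOn_comp_circleMap {F : Type*} [TopologicalSpace F] {g : ℂ → F} {c : ℂ}
    {s : Set ℝ} (S : Set ℝ) (hg : ∀ t ∈ s, ∀ θ, ContinuousAt g (circleMap c t θ)) :
    ContinuousOn (fun p : ℝ × ℝ => g (circleMap c p.1 p.2)) (s ×ˢ S) :=
  continuousOn_of_forall_continuousAt fun p hp =>
    ContinuousAt.comp (f := fun p : ℝ × ℝ => circleMap c p.1 p.2) (hg p.1 hp.1 p.2)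
      Real.circleMap.continuous.continuousAt

section Continuity

variable {F : Type*} [NormedAddCommGroup F] [NormedSpace ℝ F] {h : ℂ → F} {c : ℂ}

theorem continuous_comp_circleMap_of_contDiffAt {R : ℝ}
    (hh : ∀ θ, ContDiffAt ℝ 2 h (circleMap c R θ)) :
    (Continuous fun θ => h (circleMap c R θ)) ∧
      (Continuous fun θ => fderiv ℝ h (circleMap c R θ)) ∧
      Continuous fun θ => fderiv ℝ (fderiv ℝ h) (circleMap c R θ) :=
  ⟨continuous_comp_circleMap fun θ => (hh θ).continuousAt,
    continuous_comp_circleMap fun θ => (hh θ).continuousAt_fderiv two_ne_zero,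
    continuous_comp_circleMap fun θ =>
      ((hh θ).fderiv_right (m := 1) le_rfl).continuousAt_fderiv one_ne_zero⟩

theorem continuousOn_comp_circleMap_of_contDiffAt {s : Set ℝ} (S : Set ℝ)
    (hh : ∀ t ∈ s, ∀ θ, ContDiffAt ℝ 2 h (circleMap c t θ)) :
    ContinuousOn (fun p : ℝ × ℝ => h (circleMap c p.1 p.2)) (s ×ˢ S) ∧
      ContinuousOn (fun p : ℝ × ℝ => fderiv ℝ h (circleMap c p.1 p.2)) (s ×ˢ S) ∧
      ContinuousOn (fun p : ℝ × ℝ => fderiv ℝ (fderiv ℝ h) (circleMap c p.1 p.2)) (s ×ˢ S) :=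
  ⟨continuousOn_comp_circleMap S fun t ht θ => (hh t ht θ).continuousAt,
    continuousOn_comp_circleMap S fun t ht θ => (hh t ht θ).continuousAt_fderiv two_ne_zero,
    continuousOn_comp_circleMap S fun t ht θ =>
      ((hh t ht θ).fderiv_right (m := 1) le_rfl).continuousAt_fderiv one_ne_zero⟩

end Continuity

section CircleIntegrals

variable {E : Type*} [NormedAddCommGroup E] [InnerProductSpace ℝ E]
  {h : ℂ → E} {c : ℂ} {s : Set ℝ} {t : ℝ}

theorem hasDerivAt_integral_norm_sq_comp_circleMap (hs : IsOpen s)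
    (hh : ∀ t ∈ s, ∀ θ, ContDiffAt ℝ 2 h (circleMap c t θ)) (ht : t ∈ s) :
    HasDerivAt (fun t => ∫ θ in (0)..2 * π, ‖h (circleMap c t θ)‖ ^ 2)
      (∫ θ in (0)..2 * π,
        2 * ⟪h (circleMap c t θ), fderiv ℝ h (circleMap c t θ) (cexp (θ * I))⟫) t := by
  have he : ContinuousOn (fun p : ℝ × ℝ => cexp (p.2 * I)) (s ×ˢ uIcc 0 (2 * π)) := by fun_prop
  obtain ⟨h0, h1, -⟩ := continuousOn_comp_circleMap_of_contDiffAt (uIcc 0 (2 * π)) hh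
  refine hasDerivAt_intervalIntegral_of_continuousOn (F := fun t θ => ‖h (circleMap c t θ)‖ ^ 2)
    (F' := fun t θ => 2 * ⟪h (circleMap c t θ), fderiv ℝ h (circleMap c t θ) (cexp (θ * I))⟫)
    hs ht (h0.norm.pow 2) (continuousOn_const.mul (h0.inner (h1.clm_apply he)))
    fun x hx θ _ => ?_
  exact ((hh x hx θ).differentiableAt two_ne_zero).hasDerivAt_comp_circleMap_radius.norm_sq

theorem hasDerivAt_integral_inner_radial_comp_circleMap (hs : IsOpen s)
    (hh : ∀ t ∈ s, ∀ θ, ContDiffAt ℝ 2 h (circleMap c t θ)) (ht : t ∈ s) :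
    HasDerivAt
      (fun t => ∫ θ in (0)..2 * π,
        2 * ⟪h (circleMap c t θ), fderiv ℝ h (circleMap c t θ) (cexp (θ * I))⟫)
      (∫ θ in (0)..2 * π, (2 * ‖fderiv ℝ h (circleMap c t θ) (cexp (θ * I))‖ ^ 2 +
        2 * ⟪h (circleMap c t θ),
          fderiv ℝ (fderiv ℝ h) (circleMap c t θ) (cexp (θ * I)) (cexp (θ * I))⟫)) t := by
  have he : ContinuousOn (fun p : ℝ × ℝ => cexp (p.2 * I)) (s ×ˢ uIcc 0 (2 * π)) := by fun_prop
  obtain ⟨h0, h1, h2⟩ := continuousOn_comp_circleMap_of_contDiffAt (uIcc 0 (2 * π)) hh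
  refine hasDerivAt_intervalIntegral_of_continuousOn
    (F := fun t θ => 2 * ⟪h (circleMap c t θ), fderiv ℝ h (circleMap c t θ) (cexp (θ * I))⟫)
    (F' := fun t θ => 2 * ‖fderiv ℝ h (circleMap c t θ) (cexp (θ * I))‖ ^ 2 +
      2 * ⟪h (circleMap c t θ),
        fderiv ℝ (fderiv ℝ h) (circleMap c t θ) (cexp (θ * I)) (cexp (θ * I))⟫)
    hs ht (continuousOn_const.mul (h0.inner (h1.clm_apply he)))
    ((continuousOn_const.mul ((h1.clm_apply he).norm.pow 2)).add
      (continuousOn_const.mul (h0.inner ((h2.clm_apply he).clm_apply he)))) fun x hx θ _ => ?_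
  have hD := (((hh x hx θ).fderiv_right (m := 1) le_rfl).differentiableAt
    one_ne_zero).hasDerivAt_comp_circleMap_radius.clm_apply (hasDerivAt_const x (cexp (θ * I)))
  refine ((((hh x hx θ).differentiableAt two_ne_zero).hasDerivAt_comp_circleMap_radius.inner ℝ
    hD).const_mul 2).congr_deriv ?_
  rw [map_zero, add_zero, real_inner_self_eq_norm_sq]
  ring

/-- The integrand is the `θ`-derivative `‖h_θ‖² + ⟪h, h_θθ⟫` of the periodic `θ ↦ ⟪h, h_θ⟫`. -/
theorem integral_norm_sq_angular_add_inner_eq_zero {ρ : ℝ}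
    (hh : ∀ θ, ContDiffAt ℝ 2 h (circleMap 0 ρ θ)) :
    ∫ θ in (0)..2 * π, (‖fderiv ℝ h (circleMap 0 ρ θ) (circleMap 0 ρ θ * I)‖ ^ 2 +
      ⟪h (circleMap 0 ρ θ), fderiv ℝ (fderiv ℝ h) (circleMap 0 ρ θ) (circleMap 0 ρ θ * I)
        (circleMap 0 ρ θ * I) + fderiv ℝ h (circleMap 0 ρ θ) (circleMap 0 ρ θ * I * I)⟫) = 0 := by
  obtain ⟨h0, h1, h2⟩ := continuous_comp_circleMap_of_contDiffAt hh
  have hz : Continuous fun θ => circleMap 0 ρ θ * I :=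
    (continuous_circleMap 0 ρ).mul continuous_const
  refine integral_eq_zero_of_hasDerivAt_comp_circleMap
    (f := fun w => ⟪h w, fderiv ℝ h w (w * I)⟫) (c := 0) (R := ρ) (fun θ => ?_)
    (((h1.clm_apply hz).norm.pow 2).add (h0.inner (((h2.clm_apply hz).clm_apply hz).add
      (h1.clm_apply (hz.mul continuous_const)))) |>.intervalIntegrable _ _)
  have hD := (((hh θ).fderiv_right (m := 1) le_rfl).differentiableAt
    one_ne_zero).hasDerivAt_comp_circleMap.clm_apply ((hasDerivAt_circleMap 0 ρ θ).mul_const I)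
  refine (((hh θ).differentiableAt two_ne_zero).hasDerivAt_comp_circleMap.inner ℝ
    hD).congr_deriv ?_
  rw [real_inner_self_eq_norm_sq]
  ring

end CircleIntegrals

theorem integral_polar_energy_of_lap_eq_zero {h : ℂ → ℂ} {ρ : ℝ}
    (hh : ∀ θ, ContDiffAt ℝ 2 h (circleMap 0 ρ θ)) (hlap : ∀ θ, lap h (circleMap 0 ρ θ) = 0) :
    ρ ^ 2 * (∫ θ in (0)..2 * π,
        (2 * ‖fderiv ℝ h (circleMap 0 ρ θ) (cexp (θ * I))‖ ^ 2 + 2 * ⟪h (circleMap 0 ρ θ),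
          fderiv ℝ (fderiv ℝ h) (circleMap 0 ρ θ) (cexp (θ * I)) (cexp (θ * I))⟫)) +
      ρ * ∫ θ in (0)..2 * π,
        2 * ⟪h (circleMap 0 ρ θ), fderiv ℝ h (circleMap 0 ρ θ) (cexp (θ * I))⟫ =
      2 * ρ ^ 2 * ∫ θ in (0)..2 * π, Dn2 h (circleMap 0 ρ θ) := by
  obtain ⟨h0, h1, h2⟩ := continuous_comp_circleMap_of_contDiffAt hh
  have he : Continuous fun θ : ℝ => cexp (θ * I) := by fun_prop
  have hz : Continuous fun θ => circleMap 0 ρ θ * I :=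
    (continuous_circleMap 0 ρ).mul continuous_const
  have hpointwise := fun θ => polar_energy_identity (fderiv ℝ h (circleMap 0 ρ θ))
    (fderiv ℝ (fderiv ℝ h) (circleMap 0 ρ θ)) ((lap_eq_fderiv_fderiv
    (((hh θ).fderiv_right (m := 1) le_rfl).differentiableAt one_ne_zero)).symm.trans (hlap θ))
    (h (circleMap 0 ρ θ)) ρ θ
  have hsum := intervalIntegral.integral_congr (μ := volume) (a := 0) (b := 2 * π)
    (g := fun θ => 2 * ρ ^ 2 * Dn2 h (circleMap 0 ρ θ)) fun θ _ => hpointwise θ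
  rw [intervalIntegral.integral_add, intervalIntegral.integral_add,
    intervalIntegral.integral_const_mul 2, integral_norm_sq_angular_add_inner_eq_zero hh] at hsum
  · simp only [intervalIntegral.integral_const_mul] at hsum ⊢
    linarith
  all_goals apply Continuous.intervalIntegrable
  · exact continuous_const.mul <| (continuous_const.mul ((h1.clm_apply he).norm.pow 2)).add
      (continuous_const.mul (h0.inner ((h2.clm_apply he).clm_apply he)))
  · exact continuous_const.mul (continuous_const.mul (h0.inner (h1.clm_apply he)))
  · exact (continuous_const.mul ((continuous_const.mul ((h1.clm_apply he).norm.pow 2)).add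
      (continuous_const.mul (h0.inner ((h2.clm_apply he).clm_apply he))))).add
      (continuous_const.mul (continuous_const.mul (h0.inner (h1.clm_apply he))))
  · exact continuous_const.mul (((h1.clm_apply hz).norm.pow 2).add (h0.inner
      (((h2.clm_apply hz).clm_apply hz).add (h1.clm_apply (hz.mul continuous_const)))))

section QuadraticMean

variable {h : ℂ → ℂ} {s : Set ℝ} {t : ℝ}

theorem qMean_eq_integral_circleMap (h : ℂ → ℂ) (t : ℝ) :
    qMean h t = (2 * π)⁻¹ * ∫ θ in (0)..2 * π, ‖h (circleMap 0 t θ)‖ ^ 2 := by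
  simp only [qMean, circleMap_zero]

theorem hasDerivAt_qMean (hs : IsOpen s) (hh : ∀ t ∈ s, ∀ θ, ContDiffAt ℝ 2 h (circleMap 0 t θ))
    (ht : t ∈ s) :
    HasDerivAt (qMean h) ((2 * π)⁻¹ * ∫ θ in (0)..2 * π,
      2 * ⟪h (circleMap 0 t θ), fderiv ℝ h (circleMap 0 t θ) (cexp (θ * I))⟫) t := by
  rw [funext (qMean_eq_integral_circleMap h)]
  exact (hasDerivAt_integral_norm_sq_comp_circleMap hs hh ht).const_mul _

theorem hasDerivAt_deriv_qMean (hs : IsOpen s)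
    (hh : ∀ t ∈ s, ∀ θ, ContDiffAt ℝ 2 h (circleMap 0 t θ)) (ht : t ∈ s) :
    HasDerivAt (deriv (qMean h)) ((2 * π)⁻¹ * ∫ θ in (0)..2 * π,
      (2 * ‖fderiv ℝ h (circleMap 0 t θ) (cexp (θ * I))‖ ^ 2 + 2 * ⟪h (circleMap 0 t θ),
        fderiv ℝ (fderiv ℝ h) (circleMap 0 t θ) (cexp (θ * I)) (cexp (θ * I))⟫)) t :=
  ((hasDerivAt_integral_inner_radial_comp_circleMap hs hh ht).const_mul _).congr_of_eventuallyEq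
    (eventually_of_mem (hs.mem_nhds ht) fun _ hx => (hasDerivAt_qMean hs hh hx).deriv)

theorem sq_mul_deriv_deriv_qMean_add (hs : IsOpen s)
    (hh : ∀ t ∈ s, ∀ θ, ContDiffAt ℝ 2 h (circleMap 0 t θ))
    (hlap : ∀ θ, lap h (circleMap 0 t θ) = 0) (ht : t ∈ s) :
    t ^ 2 * deriv (deriv (qMean h)) t + t * deriv (qMean h) t =
      2 * t ^ 2 * ((2 * π)⁻¹ * ∫ θ in (0)..2 * π, Dn2 h (circleMap 0 t θ)) := by
  rw [(hasDerivAt_deriv_qMean hs hh ht).deriv, (hasDerivAt_qMean hs hh ht).deriv]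
  linear_combination (2 * π)⁻¹ * integral_polar_energy_of_lap_eq_zero (hh t ht) hlap

end QuadraticMean

theorem Lop_eq_of_sq_mul_deriv_deriv_add {U : ℝ → ℝ} {l ρ D : ℝ} (hρ : ρ ≠ 0)
    (hρl : ρ ^ 2 + l ≠ 0) (hU : ρ ^ 2 * deriv (deriv U) ρ + ρ * deriv U ρ = 2 * ρ ^ 2 * D) :
    Lop l U ρ = 2 * D - 8 * l / (ρ ^ 2 + l) ^ 2 * U ρ -
      2 * (ρ ^ 2 - l) / (ρ * (ρ ^ 2 + l)) * deriv U ρ := by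
  have hU'' : deriv (deriv U) ρ = (2 * ρ * D - deriv U ρ) / ρ :=
    eq_div_of_mul_eq hρ (mul_left_cancel₀ hρ (by linear_combination hU))
  rw [Lop, hU'']
  field_simp
  ring

section FixedRadius

variable {h : ℂ → ℂ} {ρ : ℝ}

theorem integral_lincomb_Dn2_norm_sq_inner (hh : ∀ θ, ContDiffAt ℝ 2 h (circleMap 0 ρ θ))
    (α β γ : ℝ) :
    ∫ θ in (0)..2 * π, (α * Dn2 h (circleMap 0 ρ θ) + β * ‖h (circleMap 0 ρ θ)‖ ^ 2 +
        γ * (2 * ⟪h (circleMap 0 ρ θ), fderiv ℝ h (circleMap 0 ρ θ) (cexp (θ * I))⟫)) =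
      α * (∫ θ in (0)..2 * π, Dn2 h (circleMap 0 ρ θ)) +
        β * (∫ θ in (0)..2 * π, ‖h (circleMap 0 ρ θ)‖ ^ 2) +
        γ * ∫ θ in (0)..2 * π,
          2 * ⟪h (circleMap 0 ρ θ), fderiv ℝ h (circleMap 0 ρ θ) (cexp (θ * I))⟫ := by
  obtain ⟨h0, h1, -⟩ := continuous_comp_circleMap_of_contDiffAt hh
  have he : Continuous fun θ : ℝ => cexp (θ * I) := by fun_prop
  have hDn2 : Continuous fun θ => Dn2 h (circleMap 0 ρ θ) :=
    ((h1.clm_apply continuous_const).norm.pow 2).add ((h1.clm_apply continuous_const).norm.pow 2)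
  rw [intervalIntegral.integral_add, intervalIntegral.integral_add]
  · simp only [intervalIntegral.integral_const_mul]
  all_goals apply Continuous.intervalIntegrable
  exacts [continuous_const.mul hDn2, continuous_const.mul (h0.norm.pow 2),
    (continuous_const.mul hDn2).add (continuous_const.mul (h0.norm.pow 2)),
    continuous_const.mul (continuous_const.mul (h0.inner (h1.clm_apply he)))]

theorem mean_Dn2_sub_deriv_mul_norm_sq {φ : ℝ → ℝ} {φ' : ℝ}
    (hh : ∀ θ, ContDiffAt ℝ 2 h (circleMap 0 ρ θ)) (hφ : HasDerivAt φ φ' ρ) (κ : ℝ) :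
    (2 * π)⁻¹ * ∫ θ in (0)..2 * π, (Dn2 h (circleMap 0 ρ θ) -
        κ * deriv (fun t => φ t * ‖h (circleMap 0 t θ)‖ ^ 2) ρ) =
      (2 * π)⁻¹ * (∫ θ in (0)..2 * π, Dn2 h (circleMap 0 ρ θ)) -
        κ * (φ' * ((2 * π)⁻¹ * ∫ θ in (0)..2 * π, ‖h (circleMap 0 ρ θ)‖ ^ 2) +
          φ ρ * ((2 * π)⁻¹ * ∫ θ in (0)..2 * π,
            2 * ⟪h (circleMap 0 ρ θ), fderiv ℝ h (circleMap 0 ρ θ) (cexp (θ * I))⟫)) := by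
  have hpointwise : ∀ θ, Dn2 h (circleMap 0 ρ θ) -
      κ * deriv (fun t => φ t * ‖h (circleMap 0 t θ)‖ ^ 2) ρ =
      1 * Dn2 h (circleMap 0 ρ θ) + (-κ * φ') * ‖h (circleMap 0 ρ θ)‖ ^ 2 +
        (-κ * φ ρ) *
          (2 * ⟪h (circleMap 0 ρ θ), fderiv ℝ h (circleMap 0 ρ θ) (cexp (θ * I))⟫) := by
    intro θ
    rw [(hφ.fun_mul ((hh θ).differentiableAt
      two_ne_zero).hasDerivAt_comp_circleMap_radius.norm_sq).deriv]
    ring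
  rw [intervalIntegral.integral_congr fun θ _ => hpointwise θ,
    integral_lincomb_Dn2_norm_sq_inner hh]
  ring

theorem mean_norm_sq_angular_sub_add {ψ : ℝ → ℝ} {ψ' κ : ℝ}
    (hh : ∀ θ, ContDiffAt ℝ 2 h (circleMap 0 ρ θ)) (hψ : HasDerivAt ψ ψ' ρ) (hκ : κ * ψ ρ = ρ) :
    (2 * π)⁻¹ * ∫ θ in (0)..2 * π, (‖fderiv ℝ h (circleMap 0 ρ θ) (I * circleMap 0 ρ θ)‖ ^ 2 -
        ‖h (circleMap 0 ρ θ)‖ ^ 2 +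
        κ ^ 2 * ‖deriv (fun t => ((ψ t : ℝ) : ℂ) * h (circleMap 0 t θ)) ρ‖ ^ 2) =
      ρ ^ 2 * ((2 * π)⁻¹ * ∫ θ in (0)..2 * π, Dn2 h (circleMap 0 ρ θ)) +
        (κ ^ 2 * ψ' ^ 2 - 1) * ((2 * π)⁻¹ * ∫ θ in (0)..2 * π, ‖h (circleMap 0 ρ θ)‖ ^ 2) +
        κ ^ 2 * ψ ρ * ψ' * ((2 * π)⁻¹ * ∫ θ in (0)..2 * π,
          2 * ⟪h (circleMap 0 ρ θ), fderiv ℝ h (circleMap 0 ρ θ) (cexp (θ * I))⟫) := by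
  have hpointwise : ∀ θ, ‖fderiv ℝ h (circleMap 0 ρ θ) (I * circleMap 0 ρ θ)‖ ^ 2 -
      ‖h (circleMap 0 ρ θ)‖ ^ 2 +
      κ ^ 2 * ‖deriv (fun t => ((ψ t : ℝ) : ℂ) * h (circleMap 0 t θ)) ρ‖ ^ 2 =
      ρ ^ 2 * Dn2 h (circleMap 0 ρ θ) + (κ ^ 2 * ψ' ^ 2 - 1) * ‖h (circleMap 0 ρ θ)‖ ^ 2 +
        κ ^ 2 * ψ ρ * ψ' *
          (2 * ⟪h (circleMap 0 ρ θ), fderiv ℝ h (circleMap 0 ρ θ) (cexp (θ * I))⟫) := by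
    intro θ
    have hrot := (fderiv ℝ h (circleMap 0 ρ θ)).norm_sq_apply_add_norm_sq_apply_I_mul
      (Complex.norm_exp_ofReal_mul_I θ)
    rw [(hψ.ofReal_comp.fun_mul
        ((hh θ).differentiableAt two_ne_zero).hasDerivAt_comp_circleMap_radius).deriv,
      ← Complex.real_smul, ← Complex.real_smul, norm_smul_add_smul_sq, mul_comm I,
      circleMap_zero_mul_I, map_smul, norm_smul, Real.norm_eq_abs, mul_pow, sq_abs, Dn2]
    linear_combination ρ ^ 2 * hrot +
      (κ * ψ ρ + ρ) * ‖fderiv ℝ h (circleMap 0 ρ θ) (cexp (θ * I))‖ ^ 2 * hκ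
  rw [intervalIntegral.integral_congr fun θ _ => hpointwise θ,
    integral_lincomb_Dn2_norm_sq_inner hh]
  ring

end FixedRadius

theorem isOpen_ann (r R : ℝ) : IsOpen (ann r R) :=
  (isOpen_lt continuous_const continuous_norm).inter (isOpen_lt continuous_norm continuous_const)

theorem circleMap_zero_mem_ann {r R t : ℝ} (hr : 0 ≤ r) (ht : t ∈ Ioo r R) (θ : ℝ) :
    circleMap 0 t θ ∈ ann r R := by
  show r < ‖circleMap 0 t θ‖ ∧ ‖circleMap 0 t θ‖ < R
  rwa [norm_circleMap_zero, abs_of_pos (hr.trans_lt ht.1)]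

theorem stmt9_general (R : ℝ) (h : ℂ → ℂ) (hH : HarmOn h (ann 1 R))
    (l : ℝ) (hl : l ∈ Set.Ioc (-1 : ℝ) 1) (ρ : ℝ) (hρ : ρ ∈ Set.Ioo 1 R) :
    Lop l (qMean h) ρ =
      2 * ((2 * Real.pi)⁻¹ * ∫ θ in (0:ℝ)..(2 * Real.pi),
        (Dn2 h ((ρ : ℂ) * Complex.exp ((θ : ℂ) * Complex.I)) -
          (1 / ρ) * deriv (fun t : ℝ => ((t ^ 2 - l) / (t ^ 2 + l)) *
            ‖h ((t : ℂ) * Complex.exp ((θ : ℂ) * Complex.I))‖ ^ 2) ρ)) ∧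
    Lop l (qMean h) ρ =
      (2 / ρ ^ 2) * ((2 * Real.pi)⁻¹ * ∫ θ in (0:ℝ)..(2 * Real.pi),
        (‖fderiv ℝ h ((ρ : ℂ) * Complex.exp ((θ : ℂ) * Complex.I))
            (Complex.I * ((ρ : ℂ) * Complex.exp ((θ : ℂ) * Complex.I)))‖ ^ 2 -
          ‖h ((ρ : ℂ) * Complex.exp ((θ : ℂ) * Complex.I))‖ ^ 2 +
          (ρ ^ 2 + l) ^ 2 * ‖deriv (fun t : ℝ =>
            (((t / (t ^ 2 + l) : ℝ)) : ℂ) *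
              h ((t : ℂ) * Complex.exp ((θ : ℂ) * Complex.I))) ρ‖ ^ 2)) := by
  have hρ0 : ρ ≠ 0 := (one_pos.trans hρ.1).ne'
  have hρl : ρ ^ 2 + l ≠ 0 := by nlinarith [hl.1, hρ.1]
  have hh : ∀ t ∈ Ioo 1 R, ∀ θ, ContDiffAt ℝ 2 h (circleMap 0 t θ) := fun t ht θ =>
    hH.1.contDiffAt ((isOpen_ann 1 R).mem_nhds (circleMap_zero_mem_ann zero_le_one ht θ))
  have henergy := sq_mul_deriv_deriv_qMean_add isOpen_Ioo hh
    (fun θ => hH.2 _ (circleMap_zero_mem_ann zero_le_one hρ θ)) hρ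
  have hφ : HasDerivAt (fun t => (t ^ 2 - l) / (t ^ 2 + l)) (4 * l * ρ / (ρ ^ 2 + l) ^ 2) ρ := by
    refine (((hasDerivAt_pow 2 ρ).sub_const l).div ((hasDerivAt_pow 2 ρ).add_const l)
      hρl).congr_deriv ?_
    field_simp
    ring
  have hψ : HasDerivAt (fun t => t / (t ^ 2 + l)) ((l - ρ ^ 2) / (ρ ^ 2 + l) ^ 2) ρ := by
    refine ((hasDerivAt_id' ρ).div ((hasDerivAt_pow 2 ρ).add_const l) hρl).congr_deriv ?_
    field_simp
    ring
  simp only [← circleMap_zero]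
  rw [mean_Dn2_sub_deriv_mul_norm_sq (hh ρ hρ) hφ,
    mean_norm_sq_angular_sub_add (hh ρ hρ) hψ (by field_simp)]
  rw [← qMean_eq_integral_circleMap, ← (hasDerivAt_qMean isOpen_Ioo hh hρ).deriv,
    Lop_eq_of_sq_mul_deriv_deriv_add hρ0 hρl henergy]
  constructor
  · field_simp
    ring
  · field_simp
    ring

/-- Lemma 5.1: two integral identities for `L^λ[U]`. -/
theorem stmt9 (R : ℝ) (hR : 1 < R) (h : ℂ → ℂ) (hH : HarmOn h (ann 1 R))
    (l : ℝ) (hl : l ∈ Set.Ioc (-1 : ℝ) 1) (ρ : ℝ) (hρ : ρ ∈ Set.Ioo 1 R) :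
    Lop l (qMean h) ρ =
      2 * ((2 * Real.pi)⁻¹ * ∫ θ in (0:ℝ)..(2 * Real.pi),
        (Dn2 h ((ρ : ℂ) * Complex.exp ((θ : ℂ) * Complex.I)) -
          (1 / ρ) * deriv (fun t : ℝ => ((t ^ 2 - l) / (t ^ 2 + l)) *
            ‖h ((t : ℂ) * Complex.exp ((θ : ℂ) * Complex.I))‖ ^ 2) ρ)) ∧
    Lop l (qMean h) ρ =
      (2 / ρ ^ 2) * ((2 * Real.pi)⁻¹ * ∫ θ in (0:ℝ)..(2 * Real.pi),
        (‖fderiv ℝ h ((ρ : ℂ) * Complex.exp ((θ : ℂ) * Complex.I))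
            (Complex.I * ((ρ : ℂ) * Complex.exp ((θ : ℂ) * Complex.I)))‖ ^ 2 -
          ‖h ((ρ : ℂ) * Complex.exp ((θ : ℂ) * Complex.I))‖ ^ 2 +
          (ρ ^ 2 + l) ^ 2 * ‖deriv (fun t : ℝ =>
            (((t / (t ^ 2 + l) : ℝ)) : ℂ) *
              h ((t : ℂ) * Complex.exp ((θ : ℂ) * Complex.I))) ρ‖ ^ 2)) :=
  stmt9_general R h hH l hl ρ hρ

end
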